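/- Let A be an n×n complex matrix with rows R_1,…,R_n. Then for every 0 < r ≤ 2, ∑_{k=1}^n s_k(A)^r ≤ ∑_{k=1}^n ‖R_k‖₂^r, where s_1(A),…,s_n(A) are the singular values of A. -/

import Mathlib

/-- The singular values of a square complex matrix (unordered enumeration):
`s_i(A) = sqrt(λ_i(A Aᴴ))`. -/
noncomputable def svals {n : ℕ} (A : Matrix (Fin n) (Fin n) ℂ) : Fin n → ℝ :=
  fun i => Real.sqrt ((Matrix.isHermitian_mul_conjTranspose_self A).eigenvalues i)

/-- The `i`-th row of `A` as a vector of the Euclidean space `ℂⁿ`. -/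
noncomputable def rowE {n : ℕ} (A : Matrix (Fin n) (Fin n) ℂ) (i : Fin n) :
    EuclideanSpace ℂ (Fin n) := (WithLp.equiv 2 (Fin n → ℂ)).symm (A i)


/-!
Diagonalize `A Aᴴ = U diag(λ) Uᴴ` with `U` unitary. The matrix `(|U_{ki}|²)` is doubly
stochastic, and the diagonal entry `‖R_k‖²` of `A Aᴴ` is the `k`-th weighted average
`∑ᵢ |U_{ki}|² λᵢ`, while `s_k^r = λ_k^{r/2}`. As `t ↦ t^{r/2}` is concave for `r ≤ 2`, Jensen's
inequality on each row, summed using the unit column sums, gives `∑ λᵢ^{r/2} ≤ ∑ₖ (‖R_k‖²)^{r/2}`.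
-/

open Matrix Finset

theorem ConcaveOn.sum_map_le_sum_map_sum_smul {𝕜 E β n : Type*} [Field 𝕜] [LinearOrder 𝕜]
    [IsStrictOrderedRing 𝕜] [AddCommGroup E] [AddCommGroup β] [PartialOrder β]
    [IsOrderedAddMonoid β] [Module 𝕜 E] [Module 𝕜 β] [IsStrictOrderedModule 𝕜 β]
    [Fintype n] [DecidableEq n] {s : Set E} {f : E → β} (hf : ConcaveOn 𝕜 s f)
    {W : Matrix n n 𝕜} (hW : W ∈ doublyStochastic 𝕜 n) {x : n → E} (hx : ∀ i, x i ∈ s) :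
    ∑ i, f (x i) ≤ ∑ k, f (∑ i, W k i • x i) :=
  calc ∑ i, f (x i) = ∑ k, ∑ i, W k i • f (x i) := by
        rw [Finset.sum_comm]
        simp only [← Finset.sum_smul, sum_col_of_mem_doublyStochastic hW, one_smul]
    _ ≤ ∑ k, f (∑ i, W k i • x i) := Finset.sum_le_sum fun k _ =>
        hf.le_map_sum (fun i _ => nonneg_of_mem_doublyStochastic hW)
          (sum_row_of_mem_doublyStochastic hW k) fun i _ => hx i

theorem Matrix.normSq_entries_mem_doublyStochastic {𝕜 n : Type*} [RCLike 𝕜] [Fintype n]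
    [DecidableEq n] {U : Matrix n n 𝕜} (hU : U ∈ unitaryGroup n 𝕜) :
    (of fun i j => ‖U i j‖ ^ 2) ∈ doublyStochastic ℝ n := by
  rw [mem_doublyStochastic_iff_sum]
  refine ⟨fun i j => sq_nonneg _, fun i => ?_, fun j => ?_⟩
  · have h := congr_fun₂ (mem_unitaryGroup_iff.1 hU) i i
    simp only [Matrix.mul_apply, star_apply, RCLike.star_def, RCLike.mul_conj, one_apply_eq] at h
    exact_mod_cast h
  · have h := congr_fun₂ (mem_unitaryGroup_iff'.1 hU) j j
    simp only [Matrix.mul_apply, star_apply, RCLike.star_def, RCLike.conj_mul, one_apply_eq] at h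
    exact_mod_cast h

theorem Matrix.IsHermitian.apply_self_eq_sum_eigenvalues {𝕜 n : Type*} [RCLike 𝕜] [Fintype n]
    [DecidableEq n] {A : Matrix n n 𝕜} (hA : A.IsHermitian) (i : n) :
    A i i =
      ((∑ j, ‖(hA.eigenvectorUnitary : Matrix n n 𝕜) i j‖ ^ 2 * hA.eigenvalues j : ℝ) : 𝕜) := by
  conv_lhs => rw [hA.spectral_theorem, Unitary.conjStarAlgAut_apply, Matrix.mul_apply]
  push_cast
  refine Finset.sum_congr rfl fun j _ => ?_
  rw [mul_diagonal, Function.comp_apply, mul_right_comm, star_apply, RCLike.star_def,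
    RCLike.mul_conj]

theorem Matrix.mul_conjTranspose_apply_self {𝕜 m n : Type*} [RCLike 𝕜] [Fintype n]
    (A : Matrix m n 𝕜) (i : m) :
    (A * Aᴴ) i i = ((‖WithLp.toLp 2 (A i)‖ ^ 2 : ℝ) : 𝕜) := by
  simp only [Matrix.mul_apply, conjTranspose_apply, RCLike.star_def, RCLike.mul_conj,
    EuclideanSpace.norm_sq_eq]
  push_cast
  rfl

/-- Schatten bound: for an `n × n` complex matrix `A` with rows `R_1, …, R_n` and every
`0 < r ≤ 2`, one has `∑_k s_k(A)^r ≤ ∑_k ‖R_k‖₂^r`. -/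
theorem schatten_bound {n : ℕ} (A : Matrix (Fin n) (Fin n) ℂ)
    (r : ℝ) (hr0 : 0 < r) (hr2 : r ≤ 2) :
    ∑ k : Fin n, svals A k ^ r ≤ ∑ k : Fin n, ‖rowE A k‖ ^ r := by
  set hB := isHermitian_mul_conjTranspose_self A
  set U : Matrix (Fin n) (Fin n) ℂ := (hB.eigenvectorUnitary : Matrix (Fin n) (Fin n) ℂ)
  have hrow (k : Fin n) : ‖rowE A k‖ ^ 2 = ∑ i, ‖U k i‖ ^ 2 * hB.eigenvalues i := by
    exact_mod_cast
      (A.mul_conjTranspose_apply_self k).symm.trans (hB.apply_self_eq_sum_eigenvalues k)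
  have hjensen := (Real.concaveOn_rpow (p := r / 2) (by positivity) (by linarith))
    |>.sum_map_le_sum_map_sum_smul (normSq_entries_mem_doublyStochastic hB.eigenvectorUnitary.2)
      (x := hB.eigenvalues) fun i => eigenvalues_self_mul_conjTranspose_nonneg A i
  calc ∑ k, svals A k ^ r = ∑ k, hB.eigenvalues k ^ (r / 2) := by
        simp only [svals,
          Real.rpow_div_two_eq_sqrt r (eigenvalues_self_mul_conjTranspose_nonneg A _)]
    _ ≤ ∑ k, (‖rowE A k‖ ^ 2) ^ (r / 2) := by
        simpa only [hrow, of_apply, smul_eq_mul] using hjensen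
    _ = ∑ k, ‖rowE A k‖ ^ r := by
        simp only [Real.rpow_div_two_eq_sqrt r (sq_nonneg _), Real.sqrt_sq (norm_nonneg _)]
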